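/- If η_s satisfies 1/(m(L+ε)) ≤ η_s ≤ 1/(mε) and m > max{ (L²/ε)(1 + 2L/ε), 1 + √(1 + 8L³/ε) } / ε, then γ_s := η_s[1/2 - η_s(1 + 4(m-1)L³η_s²)] is strictly positive. -/

import Mathlib

/-! With `x = m ε` and `c = 8 L³ / ε`, the upper bound `η ≤ 1 / x` and monotonicity give
`η (1 + 4 (m - 1) L³ η²) ≤ 1 / x + c / (2 x²)`, which is below `1 / 2` exactly when `c < x² - 2 x`.
That is `(x - 1)² > 1 + c`, which is what the second term of the maximum bounding `m` guarantees. -/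

lemma lt_sq_sub_two_mul_of_one_add_sqrt_lt {c x : ℝ} (hx : 1 + √(1 + c) < x) :
    c < x ^ 2 - 2 * x := by
  have hroot : √(1 + c) < x - 1 := by linarith
  have hsq : 1 + c < (x - 1) ^ 2 :=
    (Real.sqrt_lt' (by linarith [Real.sqrt_nonneg (1 + c)])).mp hroot
  linarith

lemma mul_one_add_mul_sq_lt_half {η a c x : ℝ} (hx : 0 < x) (hη : 0 ≤ η) (hηx : η ≤ x⁻¹)
    (ha : 0 ≤ a) (hac : 2 * a ≤ c * x) (hcx : c < x ^ 2 - 2 * x) :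
    η * (1 + a * η ^ 2) < 1 / 2 :=
  calc η * (1 + a * η ^ 2) ≤ x⁻¹ * (1 + a * x⁻¹ ^ 2) := by gcongr
    _ < 1 / 2 := by
      rw [← sub_pos]
      field_simp
      nlinarith

theorem stmt16 (L ε : ℝ) (hL : 0 < L) (hε : 0 < ε) (m : ℕ) (hm1 : 1 ≤ m)
    (hm : (m : ℝ) > max ((L ^ 2 / ε) * (1 + 2 * L / ε))
        (1 + Real.sqrt (1 + 8 * L ^ 3 / ε)) / ε)
    (η : ℝ) (hlow : 1 / (m * (L + ε)) ≤ η) (hhigh : η ≤ 1 / (m * ε)) :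
    0 < η * (1 / 2 - η * (1 + 4 * ((m : ℝ) - 1) * L ^ 3 * η ^ 2)) := by
  have hm1' : (1 : ℝ) ≤ m := by exact_mod_cast hm1
  have hη : 0 < η := lt_of_lt_of_le (by positivity) hlow
  have hx : 1 + √(1 + 8 * L ^ 3 / ε) < m * ε :=
    (div_lt_iff₀ hε).mp (lt_of_le_of_lt (by gcongr; exact le_max_right _ _) hm)
  have hcx := lt_sq_sub_two_mul_of_one_add_sqrt_lt hx
  have hac : 2 * (4 * ((m : ℝ) - 1) * L ^ 3) ≤ 8 * L ^ 3 / ε * (m * ε) := by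
    rw [div_mul_eq_mul_div, mul_div_assoc, mul_div_cancel_right₀ _ hε.ne']
    nlinarith [pow_pos hL 3]
  have hbound : η * (1 + 4 * ((m : ℝ) - 1) * L ^ 3 * η ^ 2) < 1 / 2 :=
    mul_one_add_mul_sq_lt_half (by positivity) hη.le (by simpa using hhigh)
      (by have := pow_pos hL 3; positivity) hac hcx
  exact mul_pos hη (by linarith)
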